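/- arXiv:1204.0880 — 4 statements merged into one kernel-verified Lean document; each statement's English description precedes it below -/
import Mathlib

section
/- Let U : ℝ → ℝ be a C² bounded solution of U'' - t·U' + f(U) = 0 on ℝ with U' > 0 everywhere, with limits U⁻ at -∞ and U⁺ at +∞. Then f(U⁻) = 0 and f(U⁺) = 0. -/
open Filter Topology

lemma mono_help {F F' : ℝ → ℝ} {T : ℝ} (hF : ∀ t, T ≤ t → HasDerivAt F (F' t) t)
    (h0 : ∀ t, T ≤ t → 0 ≤ F' t) : ∀ t, T ≤ t → F T ≤ F t := by
  have hm : MonotoneOn F (Set.Ici T) := by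
    apply monotoneOn_of_deriv_nonneg (convex_Ici T)
    · intro x hx; exact (hF x hx).continuousAt.continuousWithinAt
    · intro x hx
      rw [interior_Ici] at hx
      exact (hF x hx.le).differentiableAt.differentiableWithinAt
    · intro x hx
      rw [interior_Ici] at hx
      rw [(hF x hx.le).deriv]; exact h0 x hx.le
  exact fun t ht => hm Set.self_mem_Ici ht ht

lemma anti_help {F F' : ℝ → ℝ} {T : ℝ} (hF : ∀ t, T ≤ t → HasDerivAt F (F' t) t)
    (h0 : ∀ t, T ≤ t → F' t ≤ 0) : ∀ t, T ≤ t → F t ≤ F T := by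
  have hm : AntitoneOn F (Set.Ici T) := by
    apply antitoneOn_of_deriv_nonpos (convex_Ici T)
    · intro x hx; exact (hF x hx).continuousAt.continuousWithinAt
    · intro x hx
      rw [interior_Ici] at hx
      exact (hF x hx.le).differentiableAt.differentiableWithinAt
    · intro x hx
      rw [interior_Ici] at hx
      rw [(hF x hx.le).deriv]; exact h0 x hx.le
  exact fun t ht => hm Set.self_mem_Ici ht ht

lemma hexp_lem (t : ℝ) :
    HasDerivAt (fun t : ℝ => Real.exp (-(t^2/2))) (-t * Real.exp (-(t^2/2))) t := by
  have h1 : HasDerivAt (fun t : ℝ => -(t^2/2)) (-t) t := by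
    have h := ((hasDerivAt_pow 2 t).div_const 2).neg
    refine h.congr_deriv ?_
    ring
  simpa [mul_comm] using h1.exp

lemma aux_plus (f U : ℝ → ℝ) (Up M : ℝ) (hf : Continuous f) (hU : ContDiff ℝ 2 U)
    (hbd : ∀ t, |U t| ≤ M)
    (hode : ∀ t, deriv (deriv U) t - t * deriv U t + f (U t) = 0)
    (hmono : ∀ t, deriv U t > 0)
    (hUp : Tendsto U atTop (𝓝 Up)) : f Up = 0 := by
  have hdiffU : Differentiable ℝ U := hU.differentiable (by norm_num)
  have hdh : Differentiable ℝ (deriv U) := by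
    have h2 : ContDiff ℝ (1:ℕ) (deriv U) :=
      (contDiff_succ_iff_deriv.mp (by exact_mod_cast hU : ContDiff ℝ ((1:ℕ)+1) U)).2.2
    exact h2.differentiable (by norm_num)
  have hM : 0 ≤ M := le_trans (abs_nonneg _) (hbd 0)
  have hfc : Tendsto (fun t => f (U t)) atTop (𝓝 (f Up)) := (hf.tendsto Up).comp hUp
  set c := f Up with hc
  by_contra hne
  have hw : ∀ t, HasDerivAt (fun t => deriv U t * Real.exp (-(t^2/2)))
      (-(f (U t)) * Real.exp (-(t^2/2))) t := by
    intro t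
    have h := ((hdh t).hasDerivAt).mul (hexp_lem t)
    refine h.congr_deriv ?_
    have h2 : deriv (deriv U) t = t * deriv U t - f (U t) := by linarith [hode t]
    rw [h2]; ring
  rcases lt_or_gt_of_ne hne with hneg | hpos
  · -- c < 0 : U'' ≥ -c/2 eventually, U grows quadratically
    have hev : ∀ᶠ t in atTop, f (U t) < c/2 := by
      apply hfc.eventually (eventually_lt_nhds (by linarith))
    obtain ⟨T₀, hT₀⟩ := hev.exists_forall_of_atTop
    set T := max T₀ 0 with hTdef
    have hTnn : 0 ≤ T := le_max_right _ _
    have step1 : ∀ t, T ≤ t → deriv U T + (-c/2) * (t - T) ≤ deriv U t := by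
      have := mono_help (F := fun t => deriv U t - (-c/2) * (t - T))
        (F' := fun t => deriv (deriv U) t - (-c/2))
        (T := T) ?_ ?_
      · intro t ht
        have := this t ht
        linarith
      · intro t ht
        exact ((hdh t).hasDerivAt).sub (((hasDerivAt_id t).sub_const T).const_mul (-c/2))
          |>.congr_deriv (by ring)
      · intro t ht
        have h2 : deriv (deriv U) t = t * deriv U t - f (U t) := by linarith [hode t]
        have h3 : f (U t) < c/2 := hT₀ t (le_trans (le_max_left _ _) ht)
        have h4 : 0 ≤ t * deriv U t := mul_nonneg (le_trans hTnn ht) (hmono t).le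
        show 0 ≤ deriv (deriv U) t - -c/2
        rw [h2]; linarith
    have step2 : ∀ t, T ≤ t → U T + (-c/2) * (t - T)^2/2 ≤ U t := by
      have := mono_help (F := fun t => U t - (-c/2) * (t - T)^2/2)
        (F' := fun t => deriv U t - (-c/2) * (t - T))
        (T := T) ?_ ?_
      · intro t ht
        have := this t ht
        linarith
      · intro t ht
        have h1 : HasDerivAt (fun t : ℝ => (-c/2) * (t - T)^2/2) ((-c/2) * (t - T)) t := by
          have := (((hasDerivAt_id t).sub_const T).pow 2).const_mul (-c/2) |>.div_const 2
          refine this.congr_deriv ?_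
          simp only [id_eq]
          ring
        exact ((hdiffU t).hasDerivAt).sub h1
      · intro t ht
        have := step1 t ht
        have := hmono T
        linarith
    -- contradiction
    set s := max 1 ((4*M+2)/(-c/2)) with hs
    have hs1 : (1:ℝ) ≤ s := le_max_left _ _
    have hs2 : (4*M+2)/(-c/2) ≤ s := le_max_right _ _
    have hkey := step2 (T + s) (by linarith)
    have hδ : (0:ℝ) < -c/2 := by linarith
    have h5 : 4*M+2 ≤ (-c/2) * s := by
      rw [div_le_iff₀ hδ] at hs2; linarith [hs2]
    have h6 : (-c/2) * s ≤ (-c/2) * s^2 := by nlinarith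
    have h7 : U (T + s) ≤ M := le_trans (le_abs_self _) (hbd _)
    have h8 : -M ≤ U T := neg_le_of_abs_le (hbd T)
    nlinarith [hkey]
  · -- c > 0
    have hev : ∀ᶠ t in atTop, c/2 < f (U t) := by
      apply hfc.eventually (eventually_gt_nhds (by linarith))
    obtain ⟨T₀, hT₀⟩ := hev.exists_forall_of_atTop
    set T₁ := max T₀ 1 with hT₁def
    have hT₁1 : (1:ℝ) ≤ T₁ := le_max_right _ _
    have stepA : ∀ T, T₁ ≤ T → c/2 * (T/(T^2+1)) ≤ deriv U T := by
      intro T hT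
      have hT1 : (1:ℝ) ≤ T := le_trans hT₁1 hT
      have hTpos : (0:ℝ) < T := by linarith
      set K : ℝ := T^2/(T^2+1) with hK
      have hKpos : 0 < K := by positivity
      have hψd : ∀ t, T ≤ t → HasDerivAt
          (fun t => deriv U t * Real.exp (-(t^2/2)) - c/2 * K * (t⁻¹ * Real.exp (-(t^2/2))))
          (-(f (U t)) * Real.exp (-(t^2/2)) - c/2 * K * (-((t^2)⁻¹ + 1) * Real.exp (-(t^2/2)))) t := by
        intro t ht
        have htpos : 0 < t := lt_of_lt_of_le hTpos ht
        have hinv : HasDerivAt (fun t : ℝ => t⁻¹ * Real.exp (-(t^2/2)))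
            (-((t^2)⁻¹ + 1) * Real.exp (-(t^2/2))) t := by
          have h := (hasDerivAt_inv (ne_of_gt htpos)).mul (hexp_lem t)
          refine h.congr_deriv ?_
          field_simp
          ring
        exact (hw t).sub (hinv.const_mul (c/2 * K))
      have hψle := anti_help hψd ?_
      swap
      · intro t ht
        have htpos : 0 < t := lt_of_lt_of_le hTpos ht
        have hft : c/2 ≤ f (U t) := (hT₀ t (le_trans (le_trans (le_max_left _ _) hT) ht)).le
        have hE : 0 < Real.exp (-(t^2/2)) := Real.exp_pos _
        have hKt : K * ((t^2)⁻¹ + 1) ≤ 1 := by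
          have ht2 : (t^2)⁻¹ ≤ (T^2)⁻¹ := by
            apply inv_anti₀ (by positivity)
            nlinarith
          have h9 : K * ((t^2)⁻¹ + 1) ≤ K * ((T^2)⁻¹ + 1) :=
            mul_le_mul_of_nonneg_left (by linarith) hKpos.le
          have h10 : K * ((T^2)⁻¹ + 1) = 1 := by
            rw [hK]; field_simp; ring
          linarith
        have h11 : (c/2 * (K * ((t^2)⁻¹+1)) - f (U t)) * Real.exp (-(t^2/2)) ≤ 0 := by
          apply mul_nonpos_of_nonpos_of_nonneg _ hE.le
          have : c/2 * (K * ((t^2)⁻¹+1)) ≤ c/2 * 1 := mul_le_mul_of_nonneg_left hKt (by linarith)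
          linarith
        nlinarith [h11]
      have hlim : Tendsto (fun t : ℝ => -(c/2 * K) * (t⁻¹ * Real.exp (-(t^2/2)))) atTop (𝓝 0) := by
        have h1 : Tendsto (fun t : ℝ => t⁻¹) atTop (𝓝 (0:ℝ)) := tendsto_inv_atTop_zero
        have h2 : Tendsto (fun t : ℝ => Real.exp (-(t^2/2))) atTop (𝓝 (0:ℝ)) := by
          apply Real.tendsto_exp_atBot.comp
          apply tendsto_neg_atTop_atBot.comp
          apply Tendsto.atTop_div_const (by norm_num : (0:ℝ) < 2)
          exact tendsto_pow_atTop (by norm_num)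
        have h3 := h1.mul h2
        rw [mul_zero] at h3
        simpa using h3.const_mul (-(c/2 * K))
      have hψT : (0:ℝ) ≤ deriv U T * Real.exp (-(T^2/2)) - c/2 * K * (T⁻¹ * Real.exp (-(T^2/2))) := by
        apply le_of_tendsto hlim
        filter_upwards [eventually_ge_atTop T] with t ht
        have h12 := hψle t ht
        have h13 : 0 < deriv U t * Real.exp (-(t^2/2)) :=
          mul_pos (hmono t) (Real.exp_pos _)
        nlinarith [h12, h13]
      have hE : 0 < Real.exp (-(T^2/2)) := Real.exp_pos _
      have h14 : c/2 * K * T⁻¹ ≤ deriv U T := by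
        rw [← mul_le_mul_iff_left₀ hE]
        nlinarith [hψT]
      have h15 : c/2 * K * T⁻¹ = c/2 * (T/(T^2+1)) := by
        rw [hK]; field_simp
      linarith [h14, h15.symm.le]
    -- Step B : logarithmic growth
    have stepB : ∀ t, T₁ ≤ t → U T₁ - c/4 * Real.log T₁ + c/4 * Real.log t ≤ U t := by
      have := mono_help (F := fun t => U t - c/4 * Real.log t)
        (F' := fun t => deriv U t - c/4 * t⁻¹)
        (T := T₁) ?_ ?_
      · intro t ht
        have h16 := this t ht
        linarith
      · intro t ht
        have htpos : 0 < t := lt_of_lt_of_le (by linarith) ht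
        exact ((hdiffU t).hasDerivAt).sub ((Real.hasDerivAt_log (ne_of_gt htpos)).const_mul (c/4))
      · intro t ht
        have htpos : 0 < t := lt_of_lt_of_le (by linarith) ht
        have ht1 : (1:ℝ) ≤ t := le_trans hT₁1 ht
        have hA := stepA t ht
        have h17 : c/4 * t⁻¹ ≤ c/2 * (t/(t^2+1)) := by
          have e1 : c/4 * t⁻¹ = c/(4*t) := by field_simp
          have e2 : c/2 * (t/(t^2+1)) = c*t/(2*(t^2+1)) := div_mul_div_comm c 2 t (t^2+1)
          rw [e1, e2, div_le_div_iff₀ (by positivity) (by positivity)]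
          have ht2 : (1:ℝ) ≤ t^2 := by nlinarith
          nlinarith [mul_nonneg hpos.le (by linarith : (0:ℝ) ≤ t^2 - 1)]
        linarith
    -- contradiction
    set t₂ := T₁ * Real.exp ((8*M+4)/c) with ht₂
    have hexp1 : (1:ℝ) ≤ Real.exp ((8*M+4)/c) := by
      rw [Real.one_le_exp_iff]
      positivity
    have ht₂ge : T₁ ≤ t₂ := by
      calc T₁ = T₁ * 1 := by ring
      _ ≤ t₂ := by rw [ht₂]; exact mul_le_mul_of_nonneg_left hexp1 (by linarith)
    have hkey := stepB t₂ ht₂ge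
    have hlog : Real.log t₂ = Real.log T₁ + (8*M+4)/c := by
      rw [ht₂, Real.log_mul (by linarith) (Real.exp_ne_zero _), Real.log_exp]
    rw [hlog] at hkey
    have h18 : c/4 * ((8*M+4)/c) = 2*M+1 := by field_simp; ring
    have h19 : U t₂ ≤ M := le_trans (le_abs_self _) (hbd _)
    have h20 : -M ≤ U T₁ := neg_le_of_abs_le (hbd T₁)
    nlinarith [hkey]

theorem stmt_1 (f U : ℝ → ℝ) (Um Up : ℝ) (hf : Continuous f) (hU : ContDiff ℝ 2 U)
    (hbd : ∃ M, ∀ t, |U t| ≤ M)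
    (hode : ∀ t, deriv (deriv U) t - t * deriv U t + f (U t) = 0)
    (hmono : ∀ t, deriv U t > 0)
    (hUm : Tendsto U atBot (𝓝 Um)) (hUp : Tendsto U atTop (𝓝 Up)) :
    f Um = 0 ∧ f Up = 0 := by
  obtain ⟨M, hbd⟩ := hbd
  refine ⟨?_, aux_plus f U Up M hf hU hbd hode hmono hUp⟩
  have hdiffU : Differentiable ℝ U := hU.differentiable (by norm_num)
  have hdh : Differentiable ℝ (deriv U) := by
    have h2 : ContDiff ℝ (1:ℕ) (deriv U) :=
      (contDiff_succ_iff_deriv.mp (by exact_mod_cast hU : ContDiff ℝ ((1:ℕ)+1) U)).2.2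
    exact h2.differentiable (by norm_num)
  have hV1 : ∀ t : ℝ, HasDerivAt (fun t : ℝ => -U (-t)) (deriv U (-t)) t := by
    intro t
    have h1 : HasDerivAt (fun t : ℝ => U (-t)) (deriv U (-t) * (-1)) t :=
      ((hdiffU (-t)).hasDerivAt).comp t (hasDerivAt_neg t)
    exact h1.neg.congr_deriv (by ring)
  have hdV : (deriv fun t : ℝ => -U (-t)) = fun t : ℝ => deriv U (-t) :=
    funext fun t => (hV1 t).deriv
  have hV2 : ∀ t : ℝ, HasDerivAt (fun t : ℝ => deriv U (-t)) (deriv (deriv U) (-t) * (-1)) t :=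
    fun t => ((hdh (-t)).hasDerivAt).comp t (hasDerivAt_neg t)
  have key := aux_plus (fun u => -f (-u)) (fun t => -U (-t)) (-Um) M
    (hf.comp continuous_neg).neg
    (by simpa [Function.comp] using (hU.comp contDiff_neg).neg)
    (fun t => by simpa [abs_neg] using hbd (-t))
    (fun t => by
      rw [hdV]
      rw [(hV2 t).deriv]
      have h3 := hode (-t)
      simp only [neg_neg]
      linarith)
    (fun t => by rw [hdV]; exact hmono (-t))
    (by simpa using (hUm.comp tendsto_neg_atTop_atBot).neg)
  simpa using key
end

section
/- Suppose f : ℝ → ℝ is continuous and f ≤ 0 on an interval [U₀, U⁺] with U₀ < U⁺. Then there is no C² function U : ℝ → ℝ with U' > 0 everywhere, U(t) → U⁺ as t → +∞, satisfying U''(t) - t·U'(t) + f(U(t)) = 0 for all t, and such that U(t₀) ∈ [U₀, U⁺] for some t₀ > 0. -/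
open Filter Topology Set

theorem stmt_2 (f : ℝ → ℝ) (U₀ Up : ℝ) (hf : Continuous f) (hlt : U₀ < Up)
    (hneg : ∀ r ∈ Icc U₀ Up, f r ≤ 0) :
    ¬ ∃ U : ℝ → ℝ, ContDiff ℝ 2 U ∧ (∀ t, deriv U t > 0) ∧
      Tendsto U atTop (𝓝 Up) ∧
      (∀ t, deriv (deriv U) t - t * deriv U t + f (U t) = 0) ∧
      (∃ t₀ > (0:ℝ), U t₀ ∈ Icc U₀ Up) := by
  rintro ⟨U, hC2, hpos, hlim, hode, t₀, ht₀, hmem⟩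
  have hdiff : Differentiable ℝ U := hC2.differentiable (by norm_num)
  have hC2' : ContDiff ℝ ((1:ℕ)+1) U := by exact_mod_cast hC2
  have hC1d : ContDiff ℝ (1:ℕ) (deriv U) := (contDiff_succ_iff_deriv.mp hC2').2.2
  have hdiffd : Differentiable ℝ (deriv U) := hC1d.differentiable (by norm_num)
  have hmono : StrictMono U := strictMono_of_deriv_pos hpos
  -- U t ≤ Up for all t
  have hle : ∀ t, U t ≤ Up := by
    intro t
    exact ge_of_tendsto hlim ((eventually_ge_atTop t).mono fun s hs => hmono.monotone hs)
  have hmem' : ∀ t, t₀ ≤ t → U t ∈ Icc U₀ Up := by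
    intro t ht
    exact ⟨hmem.1.trans (hmono.monotone ht), hle t⟩
  -- second derivative nonneg on [t₀, ∞)
  have hdd : ∀ t, t₀ ≤ t → 0 ≤ deriv (deriv U) t := by
    intro t ht
    have h1 := hode t
    have h2 : f (U t) ≤ 0 := hneg _ (hmem' t ht)
    have h3 : 0 < deriv U t := hpos t
    nlinarith [ht₀.le.trans ht]
  -- deriv U is monotone on Ici t₀
  have hmonod : MonotoneOn (deriv U) (Ici t₀) := by
    apply monotoneOn_of_deriv_nonneg (convex_Ici t₀) (hdiffd.continuous.continuousOn)
      (hdiffd.differentiableOn)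
    intro t ht
    exact hdd t (le_of_lt (by simpa using ht))
  set c := deriv U t₀ with hc
  have hcpos : 0 < c := hpos t₀
  -- g = U - c*t monotone on Ici t₀
  have hdg : ∀ t, HasDerivAt (fun t => U t - c * t) (deriv U t - c) t := by
    intro t
    have h := (hdiff t).hasDerivAt.sub ((hasDerivAt_id t).const_mul c)
    rw [mul_one] at h
    exact h
  have hg : MonotoneOn (fun t => U t - c * t) (Ici t₀) := by
    apply monotoneOn_of_deriv_nonneg (convex_Ici t₀)
      (fun t _ => (hdg t).continuousAt.continuousWithinAt)
      (fun t ht => ((hdg t).differentiableAt).differentiableWithinAt)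
    intro t ht
    have ht' : t₀ ≤ t := le_of_lt (by simpa using ht)
    rw [(hdg t).deriv]
    have := hmonod (self_mem_Ici) (mem_Ici.mpr ht') ht'
    linarith
  -- contradiction
  have hdnn : 0 ≤ (Up - U t₀) / c := div_nonneg (by linarith [hle t₀]) hcpos.le
  set T := t₀ + (Up - U t₀) / c + 1 with hT
  have hTt₀ : t₀ ≤ T := by
    rw [hT]; linarith
  have h1 := hg self_mem_Ici (mem_Ici.mpr hTt₀) hTt₀
  simp only at h1
  have h2 : U T ≤ Up := hle T
  have h3 : c * (T - t₀) = Up - U t₀ + c := by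
    rw [hT]
    field_simp
    ring
  nlinarith
end

section
/- For a C² function u : ℝⁿ → ℝ and 1 ≤ N ≤ n, define D_N(x) := Σ_{1≤i,j≤N} [ (∂_{ij}u)² - (∂_j u · ∂_{ij}u / |∇_N u|)² ] at points where ∇_N u := (∂_1 u, …, ∂_N u) ≠ 0. Then D_N is nondecreasing in N: D_{N-1}(x) ≤ D_N(x) whenever both are defined (i.e., ∇_{N-1}u(x) ≠ 0). -/
open MeasureTheory Real Set Filter

noncomputable section
open scoped Classical

abbrev E (n : ℕ) := EuclideanSpace ℝ (Fin n)

def gaussD (n : ℕ) (x : E n) : ℝ := (2 * Real.pi) ^ (-(n : ℝ) / 2) * Real.exp (-‖x‖ ^ 2 / 2)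

def pd {n : ℕ} (u : E n → ℝ) (i : Fin n) (x : E n) : ℝ :=
  fderiv ℝ u x (EuclideanSpace.single i 1)

def pd2 {n : ℕ} (u : E n → ℝ) (i j : Fin n) (x : E n) : ℝ :=
  fderiv ℝ (pd u j) x (EuclideanSpace.single i 1)

def lap {n : ℕ} (u : E n → ℝ) (x : E n) : ℝ := ∑ i, pd2 u i i x

def frob2 {n : ℕ} (u : E n → ℝ) (x : E n) : ℝ := ∑ i, ∑ j, (pd2 u i j x) ^ 2

def gng2 {n : ℕ} (u : E n → ℝ) (x : E n) : ℝ :=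
  if gradient u x = 0 then 0 else ‖gradient (fun y => ‖gradient u y‖) x‖ ^ 2

def gradNsq {n : ℕ} (u : E n → ℝ) (N : ℕ) (x : E n) : ℝ :=
  ∑ j ∈ Finset.univ.filter (fun j : Fin n => (j : ℕ) < N), (pd u j x) ^ 2

def DN {n : ℕ} (u : E n → ℝ) (N : ℕ) (x : E n) : ℝ :=
  ∑ i ∈ Finset.univ.filter (fun i : Fin n => (i : ℕ) < N),
    ∑ j ∈ Finset.univ.filter (fun j : Fin n => (j : ℕ) < N),
      ((pd2 u i j x) ^ 2
        - (pd u j x * pd2 u i j x / Real.sqrt (gradNsq u N x)) ^ 2)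

theorem stmt_8 (n : ℕ) (u : E n → ℝ) (hu : ContDiff ℝ 2 u)
    (N : ℕ) (hN1 : 1 ≤ N) (hNn : N ≤ n) (x : E n)
    (hx : gradNsq u (N - 1) x ≠ 0) :
    DN u (N - 1) x ≤ DN u N x := by
  have hS1_nonneg : 0 ≤ gradNsq u (N - 1) x :=
    Finset.sum_nonneg fun j _ => sq_nonneg _
  have hS1 : 0 < gradNsq u (N - 1) x := lt_of_le_of_ne hS1_nonneg (Ne.symm hx)
  have hsub : (Finset.univ.filter (fun j : Fin n => (j : ℕ) < N - 1)) ⊆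
      (Finset.univ.filter (fun j : Fin n => (j : ℕ) < N)) := by
    intro j hj
    simp only [Finset.mem_filter, Finset.mem_univ, true_and] at *
    exact hj.trans_le (Nat.sub_le N 1)
  have hS12 : gradNsq u (N - 1) x ≤ gradNsq u N x :=
    Finset.sum_le_sum_of_subset_of_nonneg hsub (fun j _ _ => sq_nonneg _)
  have hS2 : 0 < gradNsq u N x := hS1.trans_le hS12
  have hpd : ∀ j : Fin n, (j : ℕ) < N → (pd u j x) ^ 2 ≤ gradNsq u N x := by
    intro j hj
    exact Finset.single_le_sum (f := fun j => (pd u j x) ^ 2)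
      (fun i _ => sq_nonneg _) (by simp [hj])
  have hsq : ∀ (S : ℝ), 0 < S → ∀ i j : Fin n,
      (pd u j x * pd2 u i j x / Real.sqrt S) ^ 2
        = (pd u j x) ^ 2 * (pd2 u i j x) ^ 2 / S := by
    intro S hS i j
    rw [div_pow, mul_pow, Real.sq_sqrt hS.le]
  have hterm_nonneg : ∀ i j : Fin n, (j : ℕ) < N →
      0 ≤ (pd2 u i j x) ^ 2
        - (pd u j x * pd2 u i j x / Real.sqrt (gradNsq u N x)) ^ 2 := by
    intro i j hj
    rw [hsq _ hS2, sub_nonneg, div_le_iff₀ hS2]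
    calc (pd u j x) ^ 2 * (pd2 u i j x) ^ 2
        ≤ gradNsq u N x * (pd2 u i j x) ^ 2 :=
          mul_le_mul_of_nonneg_right (hpd j hj) (sq_nonneg _)
      _ = (pd2 u i j x) ^ 2 * gradNsq u N x := mul_comm _ _
  unfold DN
  calc ∑ i ∈ Finset.univ.filter (fun i : Fin n => (i : ℕ) < N - 1),
        ∑ j ∈ Finset.univ.filter (fun j : Fin n => (j : ℕ) < N - 1),
          ((pd2 u i j x) ^ 2
            - (pd u j x * pd2 u i j x / Real.sqrt (gradNsq u (N - 1) x)) ^ 2)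
      ≤ ∑ i ∈ Finset.univ.filter (fun i : Fin n => (i : ℕ) < N - 1),
        ∑ j ∈ Finset.univ.filter (fun j : Fin n => (j : ℕ) < N - 1),
          ((pd2 u i j x) ^ 2
            - (pd u j x * pd2 u i j x / Real.sqrt (gradNsq u N x)) ^ 2) := by
        apply Finset.sum_le_sum
        intro i _
        apply Finset.sum_le_sum
        intro j _
        rw [hsq _ hS1, hsq _ hS2]
        have : (pd u j x) ^ 2 * (pd2 u i j x) ^ 2 / gradNsq u N x
            ≤ (pd u j x) ^ 2 * (pd2 u i j x) ^ 2 / gradNsq u (N - 1) x := by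
          gcongr
        linarith
    _ ≤ ∑ i ∈ Finset.univ.filter (fun i : Fin n => (i : ℕ) < N),
        ∑ j ∈ Finset.univ.filter (fun j : Fin n => (j : ℕ) < N),
          ((pd2 u i j x) ^ 2
            - (pd u j x * pd2 u i j x / Real.sqrt (gradNsq u N x)) ^ 2) := by
        calc _ ≤ ∑ i ∈ Finset.univ.filter (fun i : Fin n => (i : ℕ) < N - 1),
              ∑ j ∈ Finset.univ.filter (fun j : Fin n => (j : ℕ) < N),
                ((pd2 u i j x) ^ 2
                  - (pd u j x * pd2 u i j x / Real.sqrt (gradNsq u N x)) ^ 2) := by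
              apply Finset.sum_le_sum
              intro i _
              apply Finset.sum_le_sum_of_subset_of_nonneg hsub
              intro j hj _
              exact hterm_nonneg i j (by simpa using hj)
          _ ≤ _ := by
              apply Finset.sum_le_sum_of_subset_of_nonneg hsub
              intro i _ _
              apply Finset.sum_nonneg
              intro j hj
              exact hterm_nonneg i j (by simpa using hj)

end
end

section
/- If u : ℝⁿ → ℝ is C² and at every point x with ∇u(x) ≠ 0 the Frobenius norm of the Hessian equals the norm of the gradient of |∇u| (equivalently, the level sets of u have zero second fundamental form and |∇u| is constant along them), and moreover ∂_n u > 0 everywhere, then u is one-dimensional: there exist U : ℝ → ℝ and ω ∈ ℝⁿ with |ω| = 1 such that u(x) = U(⟨ω, x⟩) for all x. -/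
open MeasureTheory Real Set Filter

noncomputable section
open scoped Classical

namespace S11

variable {n : ℕ} {u : E n → ℝ}

lemma inner_grad (u : E n → ℝ) (x v : E n) :
    (inner ℝ (gradient u x) v : ℝ) = fderiv ℝ u x v :=
  InnerProductSpace.toDual_symm_apply

lemma coord_eq_inner (v : E n) (j : Fin n) :
    (inner ℝ v (EuclideanSpace.single j (1:ℝ)) : ℝ) = v j := by
  rw [EuclideanSpace.inner_single_right]; simp

lemma grad_coord (u : E n → ℝ) (x : E n) (j : Fin n) :
    gradient u x j = pd u j x := by
  have h := inner_grad u x (EuclideanSpace.single j 1)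
  rw [coord_eq_inner] at h
  exact h

lemma inner_expand (v w : E n) : (inner ℝ v w : ℝ) = ∑ j, v j * w j := by
  rw [PiLp.inner_apply]; simp [RCLike.inner_apply, mul_comm]

lemma norm_sq_eq (v : E n) : ‖v‖ ^ 2 = ∑ i, (v i) ^ 2 := by
  rw [EuclideanSpace.norm_eq, Real.sq_sqrt (by positivity)]
  exact Finset.sum_congr rfl fun i _ => by simp [Real.norm_eq_abs, sq_abs]

lemma hasFDerivAt_snd (hu : ContDiff ℝ 2 u) (x : E n) :
    HasFDerivAt (fderiv ℝ u) (fderiv ℝ (fderiv ℝ u) x) x :=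
  (((hu.fderiv_right (m := 1) (by norm_num)).differentiable one_ne_zero) x).hasFDerivAt

lemma hasFDerivAt_pd (hu : ContDiff ℝ 2 u) (x : E n) (j : Fin n) :
    HasFDerivAt (pd u j)
      ((ContinuousLinearMap.apply ℝ ℝ (EuclideanSpace.single j 1)).comp
        (fderiv ℝ (fderiv ℝ u) x)) x := by
  have h := (ContinuousLinearMap.apply ℝ ℝ (EuclideanSpace.single j (1:ℝ))).hasFDerivAt.comp x
    (hasFDerivAt_snd hu x)
  exact h

lemma pd2_eq (hu : ContDiff ℝ 2 u) (x : E n) (i j : Fin n) :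
    pd2 u i j x
      = fderiv ℝ (fderiv ℝ u) x (EuclideanSpace.single i 1) (EuclideanSpace.single j 1) := by
  rw [pd2, (hasFDerivAt_pd hu x j).fderiv]; rfl

def G (u : E n → ℝ) (x : E n) : E n →L[ℝ] E n :=
  ∑ j, ((ContinuousLinearMap.apply ℝ ℝ (EuclideanSpace.single j 1)).comp
    (fderiv ℝ (fderiv ℝ u) x)).smulRight (EuclideanSpace.single j 1)

lemma grad_eq_sum (u : E n → ℝ) :
    gradient u = fun y => ∑ j, (fderiv ℝ u y (EuclideanSpace.single j 1)) •
      (EuclideanSpace.single j (1:ℝ)) := by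
  funext y
  ext j'
  rw [grad_coord]
  rw [WithLp.ofLp_sum, Finset.sum_apply j' Finset.univ]
  simp [EuclideanSpace.single_apply, pd]

lemma hasFDerivAt_grad (hu : ContDiff ℝ 2 u) (x : E n) :
    HasFDerivAt (gradient u) (G u x) x := by
  rw [grad_eq_sum]
  exact HasFDerivAt.fun_sum fun j _ =>
    ((ContinuousLinearMap.apply ℝ ℝ (EuclideanSpace.single j 1)).hasFDerivAt.comp x
      (hasFDerivAt_snd hu x)).smul_const _

lemma G_coord (u : E n → ℝ) (x v : E n) (j : Fin n) :
    G u x v j = fderiv ℝ (fderiv ℝ u) x v (EuclideanSpace.single j 1) := by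
  show ((∑ j'', ((ContinuousLinearMap.apply ℝ ℝ (EuclideanSpace.single j'' 1)).comp
    (fderiv ℝ (fderiv ℝ u) x)).smulRight (EuclideanSpace.single j'' 1)) v) j = _
  rw [ContinuousLinearMap.sum_apply, WithLp.ofLp_sum, Finset.sum_apply j Finset.univ]
  simp [EuclideanSpace.single_apply]

lemma G_coord_pd2 (hu : ContDiff ℝ 2 u) (x : E n) (i j : Fin n) :
    G u x (EuclideanSpace.single i 1) j = pd2 u i j x := by
  rw [G_coord, pd2_eq hu]

lemma hasFDerivAt_norm_grad (hu : ContDiff ℝ 2 u) (x : E n) (hx : gradient u x ≠ 0) :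
    ∃ L : E n →L[ℝ] ℝ, HasFDerivAt (fun y => ‖gradient u y‖) L x ∧
      ∀ v, L v = ‖gradient u x‖⁻¹ * (inner ℝ (gradient u x) (G u x v) : ℝ) := by
  have h := hasFDerivAt_grad hu x
  have hq : HasFDerivAt (fun y => (inner ℝ (gradient u y) (gradient u y) : ℝ))
      ((fderivInnerCLM ℝ (gradient u x, gradient u x)).comp ((G u x).prod (G u x))) x :=
    h.inner ℝ h
  have hqx : (inner ℝ (gradient u x) (gradient u x) : ℝ) ≠ 0 :=
    fun h0 => hx (inner_self_eq_zero.1 h0)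
  have hs := hq.sqrt hqx
  have hfun : (fun y => Real.sqrt (inner ℝ (gradient u y) (gradient u y) : ℝ))
      = fun y => ‖gradient u y‖ := by
    funext y
    rw [real_inner_self_eq_norm_mul_norm, Real.sqrt_mul_self (norm_nonneg _)]
  rw [hfun] at hs
  refine ⟨_, hs, fun v => ?_⟩
  have hnz : ‖gradient u x‖ ≠ 0 := norm_ne_zero_iff.2 hx
  have h1 : Real.sqrt (inner ℝ (gradient u x) (gradient u x) : ℝ) = ‖gradient u x‖ := by
    rw [real_inner_self_eq_norm_mul_norm, Real.sqrt_mul_self (norm_nonneg _)]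
  simp only [ContinuousLinearMap.smul_apply, ContinuousLinearMap.comp_apply,
    ContinuousLinearMap.prod_apply, fderivInnerCLM_apply, h1, smul_eq_mul]
  rw [real_inner_comm (G u x v) (gradient u x)]
  field_simp
  ring

lemma grad_norm_coord (hu : ContDiff ℝ 2 u) (x : E n) (hx : gradient u x ≠ 0) (i : Fin n) :
    gradient (fun y => ‖gradient u y‖) x i
      = ‖gradient u x‖⁻¹ * ∑ j, gradient u x j * pd2 u i j x := by
  obtain ⟨L, hL, hLv⟩ := hasFDerivAt_norm_grad hu x hx
  have h1 : gradient (fun y => ‖gradient u y‖) x i = L (EuclideanSpace.single i 1) := by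
    rw [← coord_eq_inner (gradient (fun y => ‖gradient u y‖) x) i]
    show (inner ℝ ((InnerProductSpace.toDual ℝ (E n)).symm
      (fderiv ℝ (fun y => ‖gradient u y‖) x)) (EuclideanSpace.single i (1:ℝ)) : ℝ) = _
    rw [InnerProductSpace.toDual_symm_apply, hL.fderiv]
  rw [h1, hLv, inner_expand]
  congr 1
  exact Finset.sum_congr rfl fun j _ => by rw [G_coord_pd2 hu]

lemma key (hu : ContDiff ℝ 2 u) (x : E n) (hx : gradient u x ≠ 0)
    (heq : frob2 u x = ‖gradient (fun y => ‖gradient u y‖) x‖ ^ 2) (i j : Fin n) :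
    pd2 u i j x * ‖gradient u x‖ ^ 2
      = gradient u x j * ∑ k, gradient u x k * pd2 u i k x := by
  set F := ‖gradient u x‖ with hFdef
  set g : Fin n → ℝ := fun j => gradient u x j with hgdef
  set H : Fin n → Fin n → ℝ := fun i j => pd2 u i j x with hHdef
  set C : Fin n → ℝ := fun i => ∑ k, g k * H i k with hCdef
  have hF : 0 < F := norm_pos_iff.2 hx
  have hsum : ∑ j, (g j) ^ 2 = F ^ 2 := (norm_sq_eq (gradient u x)).symm
  have hgn : ‖gradient (fun y => ‖gradient u y‖) x‖ ^ 2 = ∑ i, (F⁻¹ * C i) ^ 2 := by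
    rw [norm_sq_eq]
    exact Finset.sum_congr rfl fun i _ => by rw [grad_norm_coord hu x hx i]
  have heq2 : ∑ i, ∑ j, (H i j) ^ 2 = F⁻¹ ^ 2 * ∑ i, (C i) ^ 2 := by
    have h := heq
    rw [hgn] at h
    rw [show frob2 u x = ∑ i, ∑ j, (H i j) ^ 2 from rfl] at h
    rw [h, Finset.mul_sum]
    exact Finset.sum_congr rfl fun i _ => by ring
  have hzero : ∑ i, ∑ j, (H i j * F ^ 2 - g j * C i) ^ 2 = 0 := by
    have per_i : ∀ i, ∑ j, (H i j * F ^ 2 - g j * C i) ^ 2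
        = F ^ 4 * (∑ j, (H i j) ^ 2) - F ^ 2 * (C i) ^ 2 := by
      intro i
      have e1 : ∑ j, (H i j * F ^ 2 - g j * C i) ^ 2
          = ∑ j, (F ^ 4 * (H i j) ^ 2 - 2 * F ^ 2 * C i * (g j * H i j) + (C i) ^ 2 * (g j) ^ 2) :=
        Finset.sum_congr rfl fun j _ => by ring
      rw [e1, Finset.sum_add_distrib, Finset.sum_sub_distrib, ← Finset.mul_sum, ← Finset.mul_sum,
        ← Finset.mul_sum, hsum]
      have hC : ∑ j, g j * H i j = C i := rfl
      rw [hC]; ring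
    rw [Finset.sum_congr rfl fun i _ => per_i i, Finset.sum_sub_distrib, ← Finset.mul_sum,
      ← Finset.mul_sum, heq2]
    field_simp
    ring
  have h2 := (Finset.sum_eq_zero_iff_of_nonneg
    (fun i _ => Finset.sum_nonneg fun j _ => sq_nonneg _)).1 hzero i (Finset.mem_univ i)
  have h3 := (Finset.sum_eq_zero_iff_of_nonneg
    (fun j _ => sq_nonneg _)).1 h2 j (Finset.mem_univ j)
  have h4 : H i j * F ^ 2 - g j * C i = 0 := by
    have := sq_eq_zero_iff.1 h3
    exact this
  have h5 : H i j * F ^ 2 = g j * C i := by linarith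
  exact h5

lemma nu_const (hu : ContDiff ℝ 2 u) (hne : ∀ x, gradient u x ≠ 0)
    (hgeom : ∀ x, gradient u x ≠ 0 →
      frob2 u x = ‖gradient (fun y => ‖gradient u y‖) x‖ ^ 2)
    (j : Fin n) (x y : E n) :
    gradient u x j / ‖gradient u x‖ = gradient u y j / ‖gradient u y‖ := by
  have main : ∀ z, HasFDerivAt (fun w => gradient u w j / ‖gradient u w‖)
      (0 : E n →L[ℝ] ℝ) z := by
    intro z
    obtain ⟨L, hL, hLv⟩ := hasFDerivAt_norm_grad hu z (hne z)
    set F := ‖gradient u z‖ with hFdef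
    have hFnz : F ≠ 0 := norm_ne_zero_iff.2 (hne z)
    have hgj : HasFDerivAt (fun w => gradient u w j)
        ((EuclideanSpace.proj j).comp (G u z)) z := by
      have h := (EuclideanSpace.proj (𝕜 := ℝ) j).hasFDerivAt.comp z (hasFDerivAt_grad hu z)
      exact h
    have hinv : HasFDerivAt (fun w => (‖gradient u w‖)⁻¹)
        ((-(F ^ 2)⁻¹) • L) z := by
      have h := (hasDerivAt_inv hFnz).comp_hasFDerivAt z hL
      exact h
    have hmul := hgj.mul hinv
    have hD : (gradient u z j • ((-(F ^ 2)⁻¹) • L)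
        + (F⁻¹) • ((EuclideanSpace.proj j).comp (G u z))) = (0 : E n →L[ℝ] ℝ) := by
      apply ContinuousLinearMap.coe_injective
      apply Module.Basis.ext (PiLp.basisFun 2 ℝ (Fin n))
      intro i
      have hb : (PiLp.basisFun 2 ℝ (Fin n)) i = EuclideanSpace.single i (1:ℝ) := by
        rw [PiLp.basisFun_apply]
      show (gradient u z j • ((-(F ^ 2)⁻¹) • L)
        + (F⁻¹) • ((EuclideanSpace.proj j).comp (G u z))) ((PiLp.basisFun 2 ℝ (Fin n)) i) = 0
      rw [hb]
      have hLe : L (EuclideanSpace.single i 1)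
          = F⁻¹ * ∑ k, gradient u z k * pd2 u i k z := by
        rw [hLv, inner_expand]
        congr 1
        exact Finset.sum_congr rfl fun k _ => by rw [G_coord_pd2 hu]
      have hproj : (EuclideanSpace.proj j) (G u z (EuclideanSpace.single i 1)) = pd2 u i j z := by
        show G u z (EuclideanSpace.single i 1) j = _
        rw [G_coord_pd2 hu]
      have hkey := key hu z (hne z) (hgeom z (hne z)) i j
      simp only [ContinuousLinearMap.add_apply, ContinuousLinearMap.smul_apply,
        ContinuousLinearMap.comp_apply, hLe, hproj, smul_eq_mul]
      rw [← hFdef] at hkey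
      field_simp
      linear_combination hkey
    have hfun : (fun w => gradient u w j / ‖gradient u w‖)
        = fun w => gradient u w j * (‖gradient u w‖)⁻¹ := by
      funext w; rw [div_eq_mul_inv]
    rw [hfun]
    rw [← hD]
    exact hmul
  exact is_const_of_fderiv_eq_zero (fun z => (main z).differentiableAt)
    (fun z => (main z).fderiv) x y

end S11

theorem stmt_11 (n : ℕ) (hn : 0 < n) (u : E n → ℝ) (hu : ContDiff ℝ 2 u)
    (hmono : ∀ x, 0 < pd u ⟨n - 1, by omega⟩ x)
    (hgeom : ∀ x, gradient u x ≠ 0 →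
      frob2 u x = ‖gradient (fun y => ‖gradient u y‖) x‖ ^ 2) :
    ∃ (U : ℝ → ℝ) (ω : E n), ‖ω‖ = 1 ∧ ∀ x, u x = U (inner ℝ ω x : ℝ) := by
  have hne : ∀ x, gradient u x ≠ 0 := by
    intro x h
    have h1 := hmono x
    rw [← S11.grad_coord u x ⟨n - 1, by omega⟩] at h1
    rw [h] at h1
    simp at h1
  have hFpos : ∀ x, 0 < ‖gradient u x‖ := fun x => norm_pos_iff.2 (hne x)
  set ω : E n := (‖gradient u 0‖)⁻¹ • gradient u 0 with hω
  have hωnorm : ‖ω‖ = 1 := by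
    rw [hω, norm_smul]
    rw [Real.norm_eq_abs, abs_of_pos (inv_pos.2 (hFpos 0))]
    field_simp
    exact div_self (hFpos 0).ne'
  have hωcoord : ∀ (x : E n) (j : Fin n), gradient u x j = ‖gradient u x‖ * ω j := by
    intro x j
    have h := S11.nu_const hu hne hgeom j x 0
    have hωj : ω j = gradient u 0 j / ‖gradient u 0‖ := by
      rw [hω]
      show (‖gradient u 0‖)⁻¹ * gradient u 0 j = _
      rw [div_eq_inv_mul]
    rw [hωj, ← h]
    rw [mul_comm, div_mul_cancel₀ _ (hFpos x).ne']
  have hgrad_eq : ∀ x, gradient u x = ‖gradient u x‖ • ω := by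
    intro x
    ext j
    show gradient u x j = ‖gradient u x‖ * ω j
    exact hωcoord x j
  have hfderiv : ∀ (x v : E n), fderiv ℝ u x v = ‖gradient u x‖ * (inner ℝ ω v : ℝ) := by
    intro x v
    have h := S11.inner_grad u x v
    rw [hgrad_eq x, real_inner_smul_left] at h
    exact h.symm
  refine ⟨fun t => u (t • ω), ω, hωnorm, ?_⟩
  intro x
  set c : ℝ := (inner ℝ ω x : ℝ) with hc
  set v : E n := x - c • ω with hv
  have hiv : (inner ℝ ω v : ℝ) = 0 := by
    rw [hv, inner_sub_right, real_inner_smul_right]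
    have : (inner ℝ ω ω : ℝ) = 1 := by
      rw [real_inner_self_eq_norm_mul_norm, hωnorm]; norm_num
    rw [this, ← hc]
    ring
  have hφ : ∀ s : ℝ, HasDerivAt (fun s : ℝ => u (c • ω + s • v)) 0 s := by
    intro s
    have hγ : HasDerivAt (fun s : ℝ => c • ω + s • v) v s := by
      simpa using ((hasDerivAt_id s).smul_const v).const_add (c • ω)
    have hus := (hu.differentiable (by norm_num) (c • ω + s • v)).hasFDerivAt
    have h := hus.comp_hasDerivAt s hγ
    rw [hfderiv, hiv, mul_zero] at h
    exact h
  have hconst : (fun s : ℝ => u (c • ω + s • v)) 1 = (fun s : ℝ => u (c • ω + s • v)) 0 :=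
    is_const_of_deriv_eq_zero (fun s => (hφ s).differentiableAt)
      (fun s => (hφ s).deriv) 1 0
  have h1 : u x = (fun s : ℝ => u (c • ω + s • v)) 1 := by
    simp only [one_smul, hv]
    congr 1
    abel
  have h0 : (fun s : ℝ => u (c • ω + s • v)) 0 = u (c • ω) := by
    simp
  rw [h1, hconst, h0]

end
end
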